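/- arXiv:2210.04375 — 2 statements merged into one kernel-verified Lean document; each statement's English description precedes it below -/
import Mathlib

section
/- Let d ≥ 1, τ > 0, let A : ℝ^d → ℝ^d be continuously differentiable with A(0) = 0 and Lipschitz with constant K (i.e. |A(x)−A(y)| ≤ K|x−y| for all x,y), and let V : ℝ^d → ℝ be continuously differentiable and bounded. Suppose that for every (x,ξ) ∈ ℝ^d × ℝ^d there are differentiable curves t ↦ X(t,x,ξ), Ξ(t,x,ξ) on [0,τ] solving Newton's magnetic system X' = Ξ + A(X), Ξ_k' = −∑_j ∂_{x_k}A_j(X)(Ξ_j + A_j(X)) − X_k − ∂_{x_k}V(X) with initial data X(0)=x, Ξ(0)=ξ, jointly measurable in (x,ξ). Let f^in be a probability density on ℝ^d × ℝ^d with finite second moments, i.e. ∫∫ (|x|² + |ξ|²) f^in(x,ξ) dx dξ < ∞. Then there is a constant C > 0, depending only on K, such that for all t ∈ [0,τ]: ∫∫ (|X(t,x,ξ)|² + |Ξ(t,x,ξ)|²) f^in(x,ξ) dx dξ ≤ C ( ∫∫ (|x|² + |ξ|²) f^in(x,ξ) dx dξ + sup_{x∈ℝ^d}|V(x)| ). 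-/
/-!
The Hamiltonian `H(x, ξ) = ½|ξ + A(x)|² + ½|x|² + V(x)` is conserved along the flow, because the
magnetic force `(∂ⱼAₖ - ∂ₖAⱼ) wⱼ`, with `w = Ξ + A(X)` the velocity, is orthogonal to `w`. Since
`|A(x)| ≤ K|x|`, the quantity `|ξ + A(x)|² + |x|²` is comparable to `|x|² + |ξ|²` up to the
factor `2(1 + K²)` in both directions, and `|V| ≤ sup |V|`; hence every trajectory obeys
`|X|² + |Ξ|² ≤ C (|x|² + |ξ|² + sup |V|)` with `C = 4(1 + K²)(2 + K²)`, and integrating this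
against `f^in` gives the moment bound.
-/

open MeasureTheory Set

noncomputable def magneticHamiltonian {F : Type*} [SeminormedAddCommGroup F] (A : F → F)
    (V : F → ℝ) (x ξ : F) : ℝ :=
  ‖ξ + A x‖ ^ 2 / 2 + ‖x‖ ^ 2 / 2 + V x

section NormBounds

variable {F : Type*} [SeminormedAddCommGroup F] {A : F → F} {K : ℝ}

theorem sq_norm_apply_le (hA : ∀ y, ‖A y‖ ≤ K * ‖y‖) (x : F) : ‖A x‖ ^ 2 ≤ K ^ 2 * ‖x‖ ^ 2 := by
  rw [← mul_pow]
  exact pow_le_pow_left₀ (norm_nonneg _) (hA x) 2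

theorem norm_add_apply_sq_add_norm_sq_le (hA : ∀ y, ‖A y‖ ≤ K * ‖y‖) (x ξ : F) :
    ‖ξ + A x‖ ^ 2 + ‖x‖ ^ 2 ≤ 2 * (1 + K ^ 2) * (‖x‖ ^ 2 + ‖ξ‖ ^ 2) := by
  have hAx := sq_norm_apply_le hA x
  have hsum : ‖ξ + A x‖ ^ 2 ≤ 2 * (‖ξ‖ ^ 2 + ‖A x‖ ^ 2) :=
    (pow_le_pow_left₀ (norm_nonneg _) (norm_add_le _ _) 2).trans add_sq_le
  nlinarith [sq_nonneg ‖x‖, sq_nonneg ‖ξ‖, mul_nonneg (sq_nonneg K) (sq_nonneg ‖ξ‖)]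

theorem norm_sq_add_norm_sq_le_norm_add_apply_sq (hA : ∀ y, ‖A y‖ ≤ K * ‖y‖) (x ξ : F) :
    ‖x‖ ^ 2 + ‖ξ‖ ^ 2 ≤ 2 * (1 + K ^ 2) * (‖ξ + A x‖ ^ 2 + ‖x‖ ^ 2) := by
  have hAx := sq_norm_apply_le hA x
  have hsub : ‖ξ‖ ^ 2 ≤ 2 * (‖ξ + A x‖ ^ 2 + ‖A x‖ ^ 2) :=
    (pow_le_pow_left₀ (norm_nonneg _) (norm_le_add_norm_add _ _) 2).trans add_sq_le
  nlinarith [sq_nonneg ‖x‖, sq_nonneg ‖ξ + A x‖, mul_nonneg (sq_nonneg K) (sq_nonneg ‖ξ + A x‖)]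

theorem norm_sq_add_norm_sq_le_of_magneticHamiltonian_eq {V : F → ℝ} {M : ℝ}
    (hA : ∀ y, ‖A y‖ ≤ K * ‖y‖) (hV : ∀ y, |V y| ≤ M) {x ξ x₀ ξ₀ : F}
    (hH : magneticHamiltonian A V x ξ = magneticHamiltonian A V x₀ ξ₀) :
    ‖x‖ ^ 2 + ‖ξ‖ ^ 2 ≤ 4 * (1 + K ^ 2) * (2 + K ^ 2) * (‖x₀‖ ^ 2 + ‖ξ₀‖ ^ 2 + M) := by
  have hM : 0 ≤ M := (abs_nonneg _).trans (hV 0)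
  have hK : 0 < 2 * (1 + K ^ 2) := by positivity
  have hQ : ‖ξ + A x‖ ^ 2 + ‖x‖ ^ 2 ≤ ‖ξ₀ + A x₀‖ ^ 2 + ‖x₀‖ ^ 2 + 4 * M := by
    unfold magneticHamiltonian at hH
    linarith [abs_le.mp (hV x), abs_le.mp (hV x₀)]
  calc ‖x‖ ^ 2 + ‖ξ‖ ^ 2 ≤ 2 * (1 + K ^ 2) * (‖ξ + A x‖ ^ 2 + ‖x‖ ^ 2) :=
        norm_sq_add_norm_sq_le_norm_add_apply_sq hA x ξ
    _ ≤ 2 * (1 + K ^ 2) * (2 * (1 + K ^ 2) * (‖x₀‖ ^ 2 + ‖ξ₀‖ ^ 2) + 4 * M) := by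
        gcongr 2 * (1 + K ^ 2) * ?_
        linarith [norm_add_apply_sq_add_norm_sq_le hA x₀ ξ₀]
    _ ≤ 4 * (1 + K ^ 2) * (2 + K ^ 2) * (‖x₀‖ ^ 2 + ‖ξ₀‖ ^ 2 + M) := by
        nlinarith [mul_nonneg hK.le (mul_nonneg (sq_nonneg K) hM),
          mul_nonneg hK.le (add_nonneg (sq_nonneg ‖x₀‖) (sq_nonneg ‖ξ₀‖))]

end NormBounds

open Matrix in
theorem Matrix.dotProduct_vecMul_sub_mulVec_self {ι R : Type*} [Fintype ι] [CommRing R]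
    (a : Matrix ι ι R) (w : ι → R) : w ⬝ᵥ (w ᵥ* a - a *ᵥ w) = 0 := by
  rw [dotProduct_sub, dotProduct_mulVec, dotProduct_comm (w ᵥ* a), sub_self]

section MagneticFlow

open Matrix

variable {ι : Type*} [Fintype ι] [DecidableEq ι]

local notation "E" => EuclideanSpace ℝ ι

theorem ContinuousLinearMap.apply_eq_sum_mul_single (L : E →L[ℝ] ℝ) (v : E) :
    L v = ∑ j, v j * L (EuclideanSpace.single j 1) := by
  conv_lhs => rw [← (EuclideanSpace.basisFun ι ℝ).sum_repr v]
  simp [EuclideanSpace.basisFun_repr, smul_eq_mul]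

theorem HasDerivAt.comp_euclidean_eq_sum {g : E → ℝ} {x : ℝ → E} {x' : E} {u : ℝ}
    (hg : DifferentiableAt ℝ g (x u)) (hx : HasDerivAt x x' u) :
    HasDerivAt (fun s => g (x s))
      (∑ j, x' j * fderiv ℝ g (x u) (EuclideanSpace.single j 1)) u := by
  rw [← ContinuousLinearMap.apply_eq_sum_mul_single]
  exact hg.hasFDerivAt.comp_hasDerivAt u hx

theorem hasDerivAt_magneticHamiltonian {A : E → E} {V : E → ℝ} {x ξ : ℝ → E} {u : ℝ}
    (hA : DifferentiableAt ℝ A (x u)) (hV : DifferentiableAt ℝ V (x u))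
    (hx : HasDerivAt x (ξ u + A (x u)) u)
    (hξ : ∀ k, HasDerivAt (fun s => ξ s k)
      (-(∑ j, fderiv ℝ (fun y => A y j) (x u) (EuclideanSpace.single k 1)
          * (ξ u j + A (x u) j)) - x u k
        - fderiv ℝ V (x u) (EuclideanSpace.single k 1)) u) :
    HasDerivAt (fun s => magneticHamiltonian A V (x s) (ξ s)) 0 u := by
  set w : ι → ℝ := fun k => ξ u k + A (x u) k
  -- `a k j = ∂ₖ Aⱼ`; the magnetic force `w ᵥ* a - a *ᵥ w` is orthogonal to `w`
  set a : Matrix ι ι ℝ := fun k j => fderiv ℝ (fun y => A y j) (x u) (EuclideanSpace.single k 1)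
  set g : ι → ℝ := fun k => fderiv ℝ V (x u) (EuclideanSpace.single k 1)
  have hxk (k : ι) : HasDerivAt (fun s => x s k) (w k) u :=
    (EuclideanSpace.proj k : E →L[ℝ] ℝ).hasFDerivAt.comp_hasDerivAt u hx
  have hAk (k : ι) : HasDerivAt (fun s => A (x s) k) ((w ᵥ* a) k) u :=
    hx.comp_euclidean_eq_sum (g := fun y => A y k)
      ((EuclideanSpace.proj k : E →L[ℝ] ℝ).differentiableAt.comp (x u) hA)
  have hwk (k : ι) : HasDerivAt (fun s => ξ s k + A (x s) k)
      ((w ᵥ* a - a *ᵥ w) k - x u k - g k) u := by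
    refine ((hξ k).fun_add (hAk k)).congr_deriv ?_
    simp only [Pi.sub_apply, mulVec, dotProduct, a, w, g]
    ring
  have hVx : HasDerivAt (fun s => V (x s)) (w ⬝ᵥ g) u := hx.comp_euclidean_eq_sum hV
  have hH : (fun s => magneticHamiltonian A V (x s) (ξ s))
      = fun s => ∑ k, (ξ s k + A (x s) k) ^ 2 / 2 + ∑ k, x s k ^ 2 / 2 + V (x s) := by
    ext s
    simp [magneticHamiltonian, EuclideanSpace.real_norm_sq_eq, Finset.sum_div]
  rw [hH]
  refine (((HasDerivAt.fun_sum (u := .univ) fun k _ => ((hwk k).fun_pow 2).div_const 2).fun_add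
    (HasDerivAt.fun_sum (u := .univ) fun k _ => ((hxk k).fun_pow 2).div_const 2)).fun_add
    hVx).congr_deriv ?_
  have hpow := dotProduct_vecMul_sub_mulVec_self a w
  simp only [dotProduct, ← Finset.sum_add_distrib] at hpow ⊢
  refine (Finset.sum_congr rfl fun k _ => ?_).trans hpow
  simp only [Pi.sub_apply, w]
  ring

theorem magneticHamiltonian_eq_of_hasDerivAt {A : E → E} {V : E → ℝ} {x ξ : ℝ → E} {τ : ℝ}
    (hA : Differentiable ℝ A) (hV : Differentiable ℝ V)
    (hx : ∀ t ∈ Icc 0 τ, HasDerivAt x (ξ t + A (x t)) t)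
    (hξ : ∀ t ∈ Icc 0 τ, ∀ k, HasDerivAt (fun s => ξ s k)
      (-(∑ j, fderiv ℝ (fun y => A y j) (x t) (EuclideanSpace.single k 1)
          * (ξ t j + A (x t) j)) - x t k
        - fderiv ℝ V (x t) (EuclideanSpace.single k 1)) t)
    {t : ℝ} (ht : t ∈ Icc 0 τ) :
    magneticHamiltonian A V (x t) (ξ t) = magneticHamiltonian A V (x 0) (ξ 0) := by
  have hH (u : ℝ) (hu : u ∈ Icc 0 τ) :
      HasDerivAt (fun s => magneticHamiltonian A V (x s) (ξ s)) 0 u :=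
    hasDerivAt_magneticHamiltonian (hA _) (hV _) (hx u hu) (hξ u hu)
  exact constant_of_has_deriv_right_zero (fun u hu => (hH u hu).continuousAt.continuousWithinAt)
    (fun u hu => (hH u (Ico_subset_Icc_self hu)).hasDerivWithinAt) t ht

end MagneticFlow

theorem integral_mul_le_of_le_mul_add {α : Type*} [MeasurableSpace α] {μ : Measure α}
    {f g h : α → ℝ} {C M : ℝ} (hf₀ : ∀ p, 0 ≤ f p) (hf : Integrable f μ)
    (hf₁ : ∫ p, f p ∂μ = 1) (hhf : Integrable (fun p => h p * f p) μ) (hg₀ : ∀ p, 0 ≤ g p)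
    (hgh : ∀ p, g p ≤ C * (h p + M)) :
    ∫ p, g p * f p ∂μ ≤ C * (∫ p, h p * f p ∂μ + M) :=
  calc ∫ p, g p * f p ∂μ ≤ ∫ p, C * (h p * f p + M * f p) ∂μ := by
        refine integral_mono_of_nonneg (ae_of_all _ fun p => mul_nonneg (hg₀ p) (hf₀ p))
          ((hhf.add (hf.const_mul M)).const_mul C) (ae_of_all _ fun p => ?_)
        calc g p * f p ≤ C * (h p + M) * f p := mul_le_mul_of_nonneg_right (hgh p) (hf₀ p)
          _ = C * (h p * f p + M * f p) := by ring
    _ = C * (∫ p, h p * f p ∂μ + M) := by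
        rw [integral_const_mul, integral_add hhf (hf.const_mul M), integral_const_mul, hf₁,
          mul_one]

theorem second_moments_propagation_general (K : ℝ) :
    ∃ C : ℝ, 0 < C ∧
      ∀ (d : ℕ), 1 ≤ d →
      ∀ (τ : ℝ), 0 < τ →
      ∀ (A : EuclideanSpace ℝ (Fin d) → EuclideanSpace ℝ (Fin d)),
        ContDiff ℝ 1 A → A 0 = 0 →
        (∀ x y, ‖A x - A y‖ ≤ K * ‖x - y‖) →
      ∀ (V : EuclideanSpace ℝ (Fin d) → ℝ),
        ContDiff ℝ 1 V → BddAbove (Set.range fun x => |V x|) →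
      ∀ (X Ξ : ℝ → (EuclideanSpace ℝ (Fin d) × EuclideanSpace ℝ (Fin d)) →
          EuclideanSpace ℝ (Fin d)),
        (∀ p, X 0 p = p.1) → (∀ p, Ξ 0 p = p.2) →
        (∀ p, ∀ t ∈ Icc (0:ℝ) τ, HasDerivAt (fun s => X s p) (Ξ t p + A (X t p)) t) →
        (∀ p, ∀ t ∈ Icc (0:ℝ) τ, ∀ k : Fin d, HasDerivAt (fun s => Ξ s p k)
          (-(∑ j : Fin d, fderiv ℝ (fun x => A x j) (X t p) (EuclideanSpace.single k 1)
              * (Ξ t p j + A (X t p) j)) - X t p k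
            - fderiv ℝ V (X t p) (EuclideanSpace.single k 1)) t) →
        (∀ t, Measurable fun p => (X t p, Ξ t p)) →
      ∀ (f : EuclideanSpace ℝ (Fin d) × EuclideanSpace ℝ (Fin d) → ℝ),
        (∀ p, 0 ≤ f p) → Integrable f → (∫ p, f p) = 1 →
        Integrable (fun p => (‖p.1‖^2 + ‖p.2‖^2) * f p) →
      ∀ t ∈ Icc (0:ℝ) τ,
        (∫ p, (‖X t p‖^2 + ‖Ξ t p‖^2) * f p)
          ≤ C * ((∫ p, (‖p.1‖^2 + ‖p.2‖^2) * f p) + ⨆ x, |V x|) := by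
  refine ⟨4 * (1 + K ^ 2) * (2 + K ^ 2), by positivity, ?_⟩
  intro d _ τ _ A hA hA0 hAL V hV hVbdd X Ξ hX0 hΞ0 hXd hΞd _ f hf₀ hf hf₁ hmom t ht
  have hAK (y : EuclideanSpace ℝ (Fin d)) : ‖A y‖ ≤ K * ‖y‖ := by
    simpa [hA0] using hAL y 0
  have hVM (y : EuclideanSpace ℝ (Fin d)) : |V y| ≤ ⨆ x, |V x| := le_ciSup hVbdd y
  refine integral_mul_le_of_le_mul_add hf₀ hf hf₁ hmom (fun p => by positivity) fun p => ?_
  have hH := magneticHamiltonian_eq_of_hasDerivAt (hA.differentiable one_ne_zero)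
    (hV.differentiable one_ne_zero) (hXd p) (hΞd p) ht
  rw [hX0, hΞ0] at hH
  exact norm_sq_add_norm_sq_le_of_magneticHamiltonian_eq hAK hVM hH

/-- **Propagation of finite second moments for the magnetic Liouville equation.**
If `f^in` is a probability density on `ℝ^d × ℝ^d` with finite second moments, and
`(X(t,x,ξ), Ξ(t,x,ξ))` is the flow of Newton's magnetic system on `[0,τ]`
(with `A` Lipschitz with constant `K`, `A(0)=0`, and `V` bounded and `C¹`),
then there is a constant `C > 0` depending only on `K` with
`∫∫ (|X(t)|² + |Ξ(t)|²) f^in ≤ C (∫∫ (|x|²+|ξ|²) f^in + sup |V|)` for all `t ∈ [0,τ]`. -/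
theorem second_moments_propagation (K : ℝ) (hK : 0 ≤ K) :
    ∃ C : ℝ, 0 < C ∧
      ∀ (d : ℕ), 1 ≤ d →
      ∀ (τ : ℝ), 0 < τ →
      ∀ (A : EuclideanSpace ℝ (Fin d) → EuclideanSpace ℝ (Fin d)),
        ContDiff ℝ 1 A → A 0 = 0 →
        (∀ x y, ‖A x - A y‖ ≤ K * ‖x - y‖) →
      ∀ (V : EuclideanSpace ℝ (Fin d) → ℝ),
        ContDiff ℝ 1 V → BddAbove (Set.range fun x => |V x|) →
      ∀ (X Ξ : ℝ → (EuclideanSpace ℝ (Fin d) × EuclideanSpace ℝ (Fin d)) →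
          EuclideanSpace ℝ (Fin d)),
        (∀ p, X 0 p = p.1) → (∀ p, Ξ 0 p = p.2) →
        (∀ p, ∀ t ∈ Icc (0:ℝ) τ, HasDerivAt (fun s => X s p) (Ξ t p + A (X t p)) t) →
        (∀ p, ∀ t ∈ Icc (0:ℝ) τ, ∀ k : Fin d, HasDerivAt (fun s => Ξ s p k)
          (-(∑ j : Fin d, fderiv ℝ (fun x => A x j) (X t p) (EuclideanSpace.single k 1)
              * (Ξ t p j + A (X t p) j)) - X t p k
            - fderiv ℝ V (X t p) (EuclideanSpace.single k 1)) t) →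
        (∀ t, Measurable fun p => (X t p, Ξ t p)) →
      ∀ (f : EuclideanSpace ℝ (Fin d) × EuclideanSpace ℝ (Fin d) → ℝ),
        (∀ p, 0 ≤ f p) → Integrable f → (∫ p, f p) = 1 →
        Integrable (fun p => (‖p.1‖^2 + ‖p.2‖^2) * f p) →
      ∀ t ∈ Icc (0:ℝ) τ,
        (∫ p, (‖X t p‖^2 + ‖Ξ t p‖^2) * f p)
          ≤ C * ((∫ p, (‖p.1‖^2 + ‖p.2‖^2) * f p) + ⨆ x, |V x|) :=
  second_moments_propagation_general K
end

section
/- Let d ≥ 1, T > 0, let X : [0,T] × (ℝ^d × ℝ^d) → ℝ^d be continuous, let K ⊆ ℝ^d × ℝ^d be compact and Ω ⊆ ℝ^d be open. Assume the Bardos–Lebeau–Rauch geometric condition: for every (x,ξ) ∈ K there exists t ∈ (0,T) such that X(t,x,ξ) ∈ Ω. Then inf_{(x,ξ)∈K} ∫_0^T 1_Ω(X(t,x,ξ)) dt > 0, where 1_Ω is the indicator function of Ω. -/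
open MeasureTheory Set Filter Topology

/-!
By continuity of the flow, the time `t₀ ∈ (0,T)` at which the trajectory of a point `p ∈ K`
enters `Ω` can be thickened to an interval `(a,b)` that works for every point near `p`, so
near `p` the occupation time of `Ω` is at least `b - a`. Compactness of `K` turns these local
lower bounds into a uniform one.
-/

theorem IsCompact.exists_pos_forall_le {α : Type*} [TopologicalSpace α] {K : Set α}
    {f : α → ℝ} (hK : IsCompact K) (hf : ∀ p ∈ K, ∃ c, 0 < c ∧ ∀ᶠ q in 𝓝 p, c ≤ f q) :
    ∃ c, 0 < c ∧ ∀ p ∈ K, c ≤ f p := by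
  refine hK.induction_on (p := fun s => ∃ c, 0 < c ∧ ∀ p ∈ s, c ≤ f p) ⟨1, one_pos, by simp⟩
    (fun s t hst ⟨c, hc, ht⟩ => ⟨c, hc, fun p hp => ht p (hst hp)⟩) ?_ ?_
  · rintro s t ⟨c, hc, hs⟩ ⟨c', hc', ht⟩
    refine ⟨min c c', lt_min hc hc', fun p hp => hp.elim ?_ ?_⟩
    · exact fun hp => (min_le_left c c').trans (hs p hp)
    · exact fun hp => (min_le_right c c').trans (ht p hp)
  · intro p hp
    obtain ⟨c, hc, hnear⟩ := hf p hp
    exact ⟨{q | c ≤ f q}, nhdsWithin_le_nhds hnear, c, hc, fun _ hq => hq⟩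

theorem exists_Ioo_eventually_mapsTo {α E : Type*} [TopologicalSpace α] [TopologicalSpace E]
    {X : ℝ → α → E} {Ω : Set E} {S : Set ℝ} {t₀ : ℝ} {p : α}
    (hX : ContinuousAt (Function.uncurry X) (t₀, p)) (hΩ : Ω ∈ 𝓝 (X t₀ p)) (hS : S ∈ 𝓝 t₀) :
    ∃ a b, a < b ∧ Ioo a b ⊆ S ∧ ∀ᶠ q in 𝓝 p, MapsTo (fun t => X t q) (Ioo a b) Ω := by
  obtain ⟨s, hs, u, hu, hsu⟩ := mem_nhds_prod_iff.1 (hX.preimage_mem_nhds hΩ)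
  obtain ⟨a, b, hab, hsub⟩ := mem_nhds_iff_exists_Ioo_subset.1 (inter_mem hs hS)
  exact ⟨a, b, hab.1.trans hab.2, hsub.trans inter_subset_right,
    mem_of_superset hu fun q hq t ht => hsu (mk_mem_prod (hsub ht).1 hq)⟩

theorem sub_le_integral_indicator_comp_of_mapsTo {E : Type*} [TopologicalSpace E]
    [MeasurableSpace E] [BorelSpace E] {g : ℝ → E} {Ω : Set E} {a b c d : ℝ}
    (hg : ContinuousOn g (Icc c d)) (hΩ : MeasurableSet Ω) (hab : a < b)
    (hsub : Ioo a b ⊆ Icc c d) (hmaps : MapsTo g (Ioo a b) Ω) :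
    b - a ≤ ∫ t in c..d, Ω.indicator (fun _ => (1 : ℝ)) (g t) := by
  obtain ⟨hca, hbd⟩ := (Icc_subset_Icc_iff hab.le).1 <|
    closure_Ioo hab.ne ▸ closure_minimal hsub isClosed_Icc
  have hcd : c ≤ d := hca.trans (hab.le.trans hbd)
  have hint : IntervalIntegrable (fun t => Ω.indicator (fun _ => (1 : ℝ)) (g t)) volume c d := by
    rw [intervalIntegrable_iff_integrableOn_Icc_of_le hcd]
    refine IntegrableOn.of_bound measure_Icc_lt_top ?_ 1 (ae_of_all _ fun t => ?_)
    · exact ((measurable_const.indicator hΩ).comp_aemeasurable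
        (hg.aemeasurable measurableSet_Icc)).aestronglyMeasurable
    · by_cases ht : g t ∈ Ω <;> simp [ht]
  have hnonneg : ∀ t, 0 ≤ Ω.indicator (fun _ => (1 : ℝ)) (g t) :=
    fun t => indicator_nonneg (fun _ _ => zero_le_one) _
  calc b - a = ∫ _ in a..b, (1 : ℝ) := by simp
    _ ≤ ∫ t in a..b, Ω.indicator (fun _ => (1 : ℝ)) (g t) :=
      intervalIntegral.integral_mono_on_of_le_Ioo hab.le intervalIntegrable_const
        (hint.mono_set (by rw [uIcc_of_le hab.le, uIcc_of_le hcd]; exact Icc_subset_Icc hca hbd))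
        fun t ht => by simp [hmaps ht]
    _ ≤ ∫ t in c..d, Ω.indicator (fun _ => (1 : ℝ)) (g t) :=
      intervalIntegral.integral_mono_interval hca hab.le hbd (ae_of_all _ hnonneg) hint

theorem observation_time_positive_general
    (d : ℕ) (T : ℝ)
    (X : ℝ → (EuclideanSpace ℝ (Fin d) × EuclideanSpace ℝ (Fin d)) →
      EuclideanSpace ℝ (Fin d))
    (hX : ContinuousOn (fun q : ℝ × (EuclideanSpace ℝ (Fin d) × EuclideanSpace ℝ (Fin d)) =>
      X q.1 q.2) (Icc (0:ℝ) T ×ˢ univ))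
    (K : Set (EuclideanSpace ℝ (Fin d) × EuclideanSpace ℝ (Fin d))) (hK : IsCompact K)
    (Ω : Set (EuclideanSpace ℝ (Fin d))) (hΩ : IsOpen Ω)
    (hGC : ∀ p ∈ K, ∃ t ∈ Ioo (0:ℝ) T, X t p ∈ Ω) :
    ∃ c : ℝ, 0 < c ∧ ∀ p ∈ K,
      c ≤ ∫ t in (0:ℝ)..T, Set.indicator Ω (fun _ => (1:ℝ)) (X t p) := by
  refine hK.exists_pos_forall_le fun p hp => ?_
  obtain ⟨t₀, ht₀, hXt₀⟩ := hGC p hp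
  have hIcc : Icc 0 T ∈ 𝓝 t₀ := Icc_mem_nhds ht₀.1 ht₀.2
  obtain ⟨a, b, hab, hsub, hnear⟩ := exists_Ioo_eventually_mapsTo (X := X)
    (hX.continuousAt (prod_mem_nhds hIcc univ_mem)) (hΩ.mem_nhds hXt₀) hIcc
  refine ⟨b - a, sub_pos.2 hab, hnear.mono fun q hq => ?_⟩
  exact sub_le_integral_indicator_comp_of_mapsTo (hX.uncurry_right q (mem_univ q))
    hΩ.measurableSet hab hsub hq

/-- **Positivity of the averaged observation time under the Bardos–Lebeau–Rauch
geometric condition:** if `X` is continuous on `[0,T] × (ℝ^d × ℝ^d)`, `K` is compact,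
`Ω` is open, and for every `(x,ξ) ∈ K` there is `t ∈ (0,T)` with `X(t,x,ξ) ∈ Ω`, then
`inf_{(x,ξ)∈K} ∫₀ᵀ 1_Ω(X(t,x,ξ)) dt > 0`. -/
theorem observation_time_positive
    (d : ℕ) (hd : 1 ≤ d) (T : ℝ) (hT : 0 < T)
    (X : ℝ → (EuclideanSpace ℝ (Fin d) × EuclideanSpace ℝ (Fin d)) →
      EuclideanSpace ℝ (Fin d))
    (hX : ContinuousOn (fun q : ℝ × (EuclideanSpace ℝ (Fin d) × EuclideanSpace ℝ (Fin d)) =>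
      X q.1 q.2) (Icc (0:ℝ) T ×ˢ univ))
    (K : Set (EuclideanSpace ℝ (Fin d) × EuclideanSpace ℝ (Fin d))) (hK : IsCompact K)
    (Ω : Set (EuclideanSpace ℝ (Fin d))) (hΩ : IsOpen Ω)
    (hGC : ∀ p ∈ K, ∃ t ∈ Ioo (0:ℝ) T, X t p ∈ Ω) :
    ∃ c : ℝ, 0 < c ∧ ∀ p ∈ K,
      c ≤ ∫ t in (0:ℝ)..T, Set.indicator Ω (fun _ => (1:ℝ)) (X t p) :=
  observation_time_positive_general d T X hX K hK Ω hΩ hGC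
end
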